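/- Let Λ be a real vector space and S : (ℕ → Λ) → Λ an ℝ-linear map satisfying the unit and associativity axioms of an algebra over the coperad ℝ[X]. Then S intertwines the right shift of sequences with ε: for every a : ℕ → Λ, S(a[-1]) = ε(S(a)), where a[-1] is the sequence with (a[-1])_0 = 0 and (a[-1])_{n+1} = a_n. -/

import Mathlib

section ShiftSingle

variable {M F : Type*} [AddCommMonoid M] [FunLike F (ℕ → M) M] [ZeroHomClass F (ℕ → M) M]

theorem apply_shiftRight_eq_apply_single (S : F)
    (hassoc : ∀ a : ℕ → ℕ → M,
      S (fun i => S (a i)) = S (fun n => ∑ p ∈ Finset.range (n + 1), a p (n - p)))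
    (k : ℕ) (a : ℕ → M) :
    S (fun n => if k ≤ n then a (n - k) else 0) = S (fun n => if n = k then S a else 0) := by
  have rows : (fun i => S (fun j => if i = k then a j else 0))
      = fun i => if i = k then S a else 0 := by
    funext i
    split_ifs
    · rfl
    · exact map_zero S
  have convolution : (fun n => ∑ p ∈ Finset.range (n + 1), if p = k then a (n - p) else 0)
      = fun n => if k ≤ n then a (n - k) else 0 := by
    funext n
    simp [Finset.sum_ite_eq']
  have := hassoc fun i j => if i = k then a j else 0
  simp only [rows, convolution] at this
  exact this.symm

end ShiftSingle

theorem S_right_shift_eq_eps_S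
    (Λ : Type*) [AddCommGroup Λ] [Module ℝ Λ]
    (S : (ℕ → Λ) →ₗ[ℝ] Λ)
    (hassoc : ∀ a : ℕ → ℕ → Λ,
      S (fun i => S (a i)) = S (fun n => ∑ p ∈ Finset.range (n + 1), a p (n - p)))
    (ε : Λ → Λ) (hε : ∀ x : Λ, ε x = S (fun n => if n = 1 then x else 0))
    (a : ℕ → Λ) :
    S (fun n => match n with | 0 => (0 : Λ) | k + 1 => a k) = ε (S a) := by
  have shift_eq : (fun n => match n with | 0 => (0 : Λ) | k + 1 => a k)
      = fun n => if 1 ≤ n then a (n - 1) else 0 := by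
    funext n
    cases n <;> simp
  rw [shift_eq, hε, apply_shiftRight_eq_apply_single S hassoc]
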